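/- Let N ≥ 2 and K ≥ 1, and let (w, P) be a configuration with confidence e. If e = 1, then for every function f : ℝ → ℝ the f-impurity satisfies I = f(1) + (N−1)·f(0). (Equality case e = 1 of Theorem 2: the upper bound u(e) is attained.) -/

import Mathlib

/-!
Every maximum `max_i P k i` is at most `1`, so their `w`-average can equal `1` only if
`max_i P k i = 1` whenever `w k > 0`. A probability vector with an entry `1` is a point mass,
so for those `k` the inner sum is `f 1 + (N - 1) f 0`, and averaging over `w` gives the claim.
-/

open Finset

noncomputable def colMax {N : ℕ} (hN : 0 < N) (v : Fin N → ℝ) : ℝ :=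
  Finset.univ.sup' (Finset.univ_nonempty_iff.mpr ⟨⟨0, hN⟩⟩) v

section ProbabilityVector

variable {ι : Type*} [Fintype ι] {p : ι → ℝ}

theorem sup'_le_one_of_sum_eq_one (hp : ∀ i, 0 ≤ p i) (hs : ∑ i, p i = 1)
    (hne : (univ : Finset ι).Nonempty) : univ.sup' hne p ≤ 1 :=
  sup'_le _ _ fun i _ => hs ▸ single_le_sum (fun j _ => hp j) (mem_univ i)

theorem eq_zero_of_sum_eq_one_of_eq_one [DecidableEq ι] (hp : ∀ i, 0 ≤ p i)
    (hs : ∑ i, p i = 1) {i₀ : ι} (hi₀ : p i₀ = 1) {i : ι} (hi : i ≠ i₀) : p i = 0 := by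
  have hrest : ∑ j ∈ {i₀}ᶜ, p j = 0 := by
    rw [Fintype.sum_eq_add_sum_compl i₀, hi₀] at hs
    linarith
  exact (sum_eq_zero_iff_of_nonneg fun j _ => hp j).mp hrest i (by simpa using hi)

theorem sum_comp_eq_of_sup'_eq_one (hp : ∀ i, 0 ≤ p i) (hs : ∑ i, p i = 1)
    {hne : (univ : Finset ι).Nonempty} (hmax : univ.sup' hne p = 1) (f : ℝ → ℝ) :
    ∑ i, f (p i) = f 1 + ((Fintype.card ι : ℝ) - 1) * f 0 := by
  classical
  obtain ⟨i₀, -, hi₀⟩ := exists_mem_eq_sup' hne p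
  rw [hmax] at hi₀
  have hcard : 1 ≤ Fintype.card ι := Fintype.card_pos_iff.mpr ⟨i₀⟩
  calc ∑ i, f (p i) = f (p i₀) + ∑ i ∈ {i₀}ᶜ, f (p i) := Fintype.sum_eq_add_sum_compl i₀ _
    _ = f 1 + ∑ _i ∈ ({i₀}ᶜ : Finset ι), f 0 := by
      rw [← hi₀]
      congr 1
      refine sum_congr rfl fun i hi => ?_
      rw [eq_zero_of_sum_eq_one_of_eq_one hp hs hi₀.symm (by simpa using hi)]
    _ = f 1 + ((Fintype.card ι : ℝ) - 1) * f 0 := by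
      rw [sum_const, card_compl, card_singleton, nsmul_eq_mul, Nat.cast_sub hcard, Nat.cast_one]

end ProbabilityVector

theorem eq_one_of_sum_mul_eq_one {κ : Type*} [Fintype κ] {w m : κ → ℝ} (hw : ∀ k, 0 ≤ w k)
    (hws : ∑ k, w k = 1) (hm : ∀ k, m k ≤ 1) (h : ∑ k, w k * m k = 1) {k : κ} (hk : w k ≠ 0) :
    m k = 1 := by
  have hgap : ∑ j, w j * (1 - m j) = 0 := by
    simp only [mul_sub, mul_one, sum_sub_distrib, hws, h, sub_self]
  have hgap_k := (sum_eq_zero_iff_of_nonneg fun j _ => mul_nonneg (hw j) (sub_nonneg.mpr (hm j))).mp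
    hgap k (mem_univ k)
  linarith [(mul_eq_zero.mp hgap_k).resolve_left hk]

/-- Equality case `e = 1` of Theorem 2: if the confidence equals `1`, then the
`f`-impurity equals `f(1) + (N-1) * f(0)` for every `f`. -/
theorem confidence_eq_one (N K : ℕ) (hN : 2 ≤ N)
    (w : Fin K → ℝ) (hw : ∀ k, 0 ≤ w k) (hws : ∑ k, w k = 1)
    (P : Fin K → Fin N → ℝ) (hP : ∀ k i, 0 ≤ P k i) (hPs : ∀ k, ∑ i, P k i = 1)
    (e : ℝ) (he : e = ∑ k, w k * colMax (by omega) (P k))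
    (heq : e = 1) :
    ∀ f : ℝ → ℝ, ∑ k, ∑ i, w k * f (P k i) = f 1 + ((N : ℝ) - 1) * f 0 := by
  intro f
  have hmax : ∀ k, w k ≠ 0 → colMax (by omega) (P k) = 1 :=
    fun k => eq_one_of_sum_mul_eq_one hw hws
      (fun k => sup'_le_one_of_sum_eq_one (hP k) (hPs k) _) (he ▸ heq)
  calc ∑ k, ∑ i, w k * f (P k i) = ∑ k, w k * (f 1 + ((N : ℝ) - 1) * f 0) := by
        refine sum_congr rfl fun k _ => ?_
        rw [← mul_sum]
        by_cases hk : w k = 0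
        · simp only [hk, zero_mul]
        · rw [sum_comp_eq_of_sup'_eq_one (hP k) (hPs k) (hmax k hk), Fintype.card_fin]
    _ = f 1 + ((N : ℝ) - 1) * f 0 := by rw [← sum_mul, hws, one_mul]
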